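/- arXiv:1404.2433 — 5 statements merged into one kernel-verified Lean document; each statement's English description precedes it below -/
import Mathlib

section
/- For any radii r, R > 0, there exists a smooth map f from the open disk of radius R in ℝ² to the open disk of radius r in ℝ² that sends the origin to itself and is symplectic, i.e. pulls back the standard area form dx ∧ dy on ℝ² to itself (equivalently, f is area-preserving and orientation-preserving: its Jacobian determinant equals 1 everywhere). -/
open Metric

open Complex in
/-- The real-linear map `w ↦ A * w + B * conj w` on `ℂ`. -/
noncomputable def symplAux.Lab (A B : ℂ) : ℂ →L[ℝ] ℂ :=
  A • (ContinuousLinearMap.id ℝ ℂ) + B • (conjCLE : ℂ →L[ℝ] ℂ)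

open Complex in
lemma symplAux.Lab_det (A B : ℂ) :
    LinearMap.det ((symplAux.Lab A B : ℂ →L[ℝ] ℂ) : ℂ →ₗ[ℝ] ℂ) = normSq A - normSq B := by
  rw [← LinearMap.det_toMatrix Complex.basisOneI, Matrix.det_fin_two]
  simp [symplAux.Lab, LinearMap.toMatrix_apply, Complex.basisOneI, normSq_apply]
  ring

open Complex in
lemma symplAux.hasFDerivAt_F (k : ℕ) (C : ℂ) (z : ℂ) (hz : z ≠ 0) :
    HasFDerivAt (fun w : ℂ => C * (w ^ (k+1) * ((starRingEnd ℂ) w) ^ (-(k:ℤ))))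
      (symplAux.Lab (C * ((k+1 : ℂ) * z ^ k * ((starRingEnd ℂ) z) ^ (-(k:ℤ))))
         (C * (z ^ (k+1) * (-(k:ℂ) * ((starRingEnd ℂ) z) ^ (-(k:ℤ) - 1))))) z := by
  have hconj : (starRingEnd ℂ) z ≠ 0 := by simpa using hz
  have h1 : HasFDerivAt (fun w : ℂ => w ^ (k+1))
      ((((k+1 : ℂ) * z ^ k) • (ContinuousLinearMap.id ℝ ℂ)) : ℂ →L[ℝ] ℂ) z := by
    have := (hasDerivAt_pow (k+1) z).hasFDerivAt.restrictScalars ℝ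
    refine this.congr_fderiv ?_
    ext w
    simp [mul_comm]
  have h2 : HasFDerivAt (fun w : ℂ => ((starRingEnd ℂ) w) ^ (-(k:ℤ)))
      (((-(k:ℂ) * ((starRingEnd ℂ) z) ^ (-(k:ℤ) - 1)) • (conjCLE : ℂ →L[ℝ] ℂ)) : ℂ →L[ℝ] ℂ) z := by
    have ho : HasFDerivAt (fun t : ℂ => t ^ (-(k:ℤ)))
        ((((-(k:ℤ) : ℂ) * ((starRingEnd ℂ) z) ^ (-(k:ℤ) - 1)) •
          (ContinuousLinearMap.id ℝ ℂ)) : ℂ →L[ℝ] ℂ) ((starRingEnd ℂ) z) := by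
      have := (hasDerivAt_zpow (-(k:ℤ)) ((starRingEnd ℂ) z) (Or.inl hconj)).hasFDerivAt.restrictScalars ℝ
      refine this.congr_fderiv ?_
      ext w
      simp [mul_comm]
    have hc : HasFDerivAt (fun w : ℂ => (starRingEnd ℂ) w) (conjCLE : ℂ →L[ℝ] ℂ) z :=
      conjCLE.hasFDerivAt
    exact ho.comp z hc
  have := ((h1.mul h2).const_mul C)
  refine this.congr_fderiv ?_
  ext w
  simp [symplAux.Lab]
  ring

open Complex in
lemma symplAux.normSq_det (k : ℕ) (c : ℝ) (hc2 : c ^ 2 * (2 * k + 1) = 1)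
    (w : ℂ) (hw : w ≠ 0) :
    normSq ((c:ℂ) * ((k+1 : ℂ) * w ^ k * ((starRingEnd ℂ) w) ^ (-(k:ℤ))))
      - normSq ((c:ℂ) * (w ^ (k+1) * (-(k:ℂ) * ((starRingEnd ℂ) w) ^ (-(k:ℤ) - 1)))) = 1 := by
  have hs : normSq w ≠ 0 := by simpa using hw
  have hs1 : normSq w ^ (k:ℤ) * normSq w ^ (-(k:ℤ)) = 1 := by
    rw [← zpow_add₀ hs]; simp
  have hs2 : normSq w ^ ((k:ℤ)+1) * normSq w ^ (-(k:ℤ)-1) = 1 := by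
    have h0 : (k:ℤ)+1 + (-(k:ℤ)-1) = 0 := by ring
    rw [← zpow_add₀ hs, h0, zpow_zero]
  have e1 : normSq (w ^ k) = normSq w ^ (k:ℤ) := by
    rw [map_pow]; norm_cast
  have e2 : normSq (w ^ (k+1)) = normSq w ^ ((k:ℤ)+1) := by
    rw [map_pow]; norm_cast
  have e3 : normSq (((starRingEnd ℂ) w) ^ (-(k:ℤ))) = normSq w ^ (-(k:ℤ)) := by
    rw [map_zpow₀, normSq_conj]
  have e4 : normSq (((starRingEnd ℂ) w) ^ (-(k:ℤ)-1)) = normSq w ^ (-(k:ℤ)-1) := by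
    rw [map_zpow₀, normSq_conj]
  have e5 : normSq ((k:ℂ)+1) = ((k:ℝ)+1)^2 := by
    have : ((k:ℂ)+1) = (((k:ℝ)+1 : ℝ) : ℂ) := by push_cast; ring
    rw [this, normSq_ofReal]; ring
  rw [map_mul, map_mul, map_mul, map_mul, map_mul, map_mul, normSq_neg, normSq_natCast,
    normSq_ofReal, e1, e2, e3, e4, e5]
  have expand : c * c * (((k:ℝ)+1)^2 * (normSq w ^ (k:ℤ)) * (normSq w ^ (-(k:ℤ))))
      - c * c * ((normSq w ^ ((k:ℤ)+1)) * ((k:ℝ)*(k:ℝ) * (normSq w ^ (-(k:ℤ)-1))))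
      = c^2 * (((k:ℝ)+1)^2 - (k:ℝ)^2) := by
    have t1 : ((k:ℝ)+1)^2 * (normSq w ^ (k:ℤ)) * (normSq w ^ (-(k:ℤ)))
        = ((k:ℝ)+1)^2 := by rw [mul_assoc, hs1, mul_one]
    have t2 : (normSq w ^ ((k:ℤ)+1)) * ((k:ℝ)*(k:ℝ) * (normSq w ^ (-(k:ℤ)-1)))
        = (k:ℝ)^2 := by
      rw [mul_comm ((k:ℝ)*(k:ℝ)), ← mul_assoc, hs2]; ring
    rw [t1, t2]; ring
  rw [expand]
  have : ((k:ℝ)+1)^2 - (k:ℝ)^2 = 2*(k:ℝ)+1 := by ring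
  rw [this, hc2]

open Complex in
lemma symplAux.norm_F (k : ℕ) (c : ℝ) (hc0 : 0 ≤ c) (w : ℂ) (hw : w ≠ 0) :
    ‖(c:ℂ) * (w ^ (k+1) * ((starRingEnd ℂ) w) ^ (-(k:ℤ)))‖ = c * ‖w‖ := by
  have hnw : ‖w‖ ≠ 0 := norm_ne_zero_iff.2 hw
  rw [norm_mul, norm_mul, norm_zpow, RCLike.norm_conj, norm_pow, Complex.norm_real,
    Real.norm_of_nonneg hc0]
  congr 1
  rw [← zpow_natCast ‖w‖ (k+1), ← zpow_add₀ hnw]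
  push_cast
  ring_nf
  rw [zpow_one]

/-- For any `r, R > 0` there is a smooth symplectic (area-preserving,
orientation-preserving, i.e. Jacobian determinant `1`) map from the open disk of radius
`R` in `ℝ²` to the open disk of radius `r`, sending the origin to itself. -/
theorem exists_symplectic_disk_map (r R : ℝ) (hr : 0 < r) (hR : 0 < R) :
    ∃ f : EuclideanSpace ℝ (Fin 2) → EuclideanSpace ℝ (Fin 2),
      ContDiffOn ℝ (⊤ : ℕ∞) f (ball 0 R) ∧
      Set.MapsTo f (ball 0 R) (ball 0 r) ∧
      f 0 = 0 ∧
      ∀ z ∈ ball (0 : EuclideanSpace ℝ (Fin 2)) R, (fderiv ℝ f z).det = 1 := by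
  classical
  obtain ⟨k, hk⟩ := exists_nat_gt ((5 * R / r) ^ 2)
  have hm0 : (0:ℝ) < 2 * k + 1 := by positivity
  have hm1 : (5 * R / r) ^ 2 < 2 * (k:ℝ) + 1 := by
    have hk0 : (0:ℝ) ≤ (k:ℝ) := Nat.cast_nonneg k
    linarith
  set c : ℝ := (Real.sqrt (2 * k + 1))⁻¹ with hc_def
  have hsq : 0 < Real.sqrt (2 * k + 1) := Real.sqrt_pos.2 hm0
  have hc0 : 0 < c := inv_pos.2 hsq
  have hc2 : c ^ 2 * (2 * k + 1) = 1 := by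
    rw [hc_def, inv_pow, Real.sq_sqrt hm0.le]
    field_simp
  have hcr : c * (5 * R) < r := by
    have h5R : 0 < 5 * R := by linarith
    have hlt : 5 * R / r < Real.sqrt (2 * k + 1) := by
      have := (Real.lt_sqrt (by positivity)).2 hm1
      exact this
    have : 5 * R / r > 0 := by positivity
    calc c * (5 * R) < (5 * R / r)⁻¹ * (5 * R) := by
          apply mul_lt_mul_of_pos_right _ h5R
          exact inv_strictAnti₀ this hlt
      _ = r := by field_simp
  -- the complex map
  set C : ℂ := (c : ℂ) with hC_def
  set F : ℂ → ℂ := fun w => C * (w ^ (k+1) * ((starRingEnd ℂ) w) ^ (-(k:ℤ))) with hF_def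
  set p : ℂ := ((2 * R : ℝ) : ℂ) with hp_def
  have hpnorm : ‖p‖ = 2 * R := by
    rw [hp_def, Complex.norm_real, Real.norm_of_nonneg (by linarith)]
  have hne : ∀ z : ℂ, z ∈ ball (0:ℂ) R → z + p ≠ 0 := by
    intro z hz h0
    have hzn : ‖z‖ < R := by simpa [mem_ball_zero_iff] using hz
    have : z = -p := by linear_combination h0
    rw [this, norm_neg, hpnorm] at hzn
    linarith
  have hFnorm : ∀ w : ℂ, w ≠ 0 → ‖F w‖ = c * ‖w‖ := fun w hw =>
    symplAux.norm_F k c hc0.le w hw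
  set G : ℂ → ℂ := fun z => F (z + p) - F p with hG_def
  have hp_ne : p ≠ 0 := by
    intro h
    rw [← norm_eq_zero, hpnorm] at h
    linarith
  -- G maps ball into small ball
  have hGmaps : ∀ z : ℂ, z ∈ ball (0:ℂ) R → ‖G z‖ < r := by
    intro z hz
    have hzn : ‖z‖ < R := by simpa [mem_ball_zero_iff] using hz
    have h1 : ‖F (z + p)‖ = c * ‖z + p‖ := hFnorm _ (hne z hz)
    have h2 : ‖F p‖ = c * ‖p‖ := hFnorm _ hp_ne
    have h3 : ‖z + p‖ ≤ ‖z‖ + ‖p‖ := norm_add_le _ _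
    have h4 : ‖z + p‖ ≤ 3 * R := by rw [hpnorm] at h3; linarith
    calc ‖G z‖ ≤ ‖F (z + p)‖ + ‖F p‖ := norm_sub_le _ _
      _ = c * ‖z + p‖ + c * (2 * R) := by rw [h1, h2, hpnorm]
      _ ≤ c * (3 * R) + c * (2 * R) := by nlinarith
      _ = c * (5 * R) := by ring
      _ < r := hcr
  -- smoothness of F away from 0
  have hF_cd : ∀ w : ℂ, w ≠ 0 → ContDiffAt ℝ (⊤ : ℕ∞) F w := by
    intro w hw
    have hconj : (starRingEnd ℂ) w ≠ 0 := by simpa using hw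
    have hcconj : ContDiff ℝ (⊤ : ℕ∞) (fun x : ℂ => (starRingEnd ℂ) x) := by
      have := (Complex.conjCLE : ℂ ≃L[ℝ] ℂ).toContinuousLinearMap.contDiff (n := (⊤ : ℕ∞))
      exact this
    have h1 : ContDiffAt ℝ (⊤ : ℕ∞) (fun x : ℂ => x ^ (k+1)) w := (contDiff_id.pow _).contDiffAt
    have h2 : ContDiffAt ℝ (⊤ : ℕ∞) (fun x : ℂ => ((starRingEnd ℂ) x) ^ (-(k:ℤ))) w := by
      have hinv : ContDiffAt ℝ (⊤ : ℕ∞) (fun x : ℂ => (((starRingEnd ℂ) x) ^ k)⁻¹) w :=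
        ((hcconj.pow k).contDiffAt).inv (pow_ne_zero k hconj)
      have : (fun x : ℂ => ((starRingEnd ℂ) x) ^ (-(k:ℤ)))
          = fun x : ℂ => (((starRingEnd ℂ) x) ^ k)⁻¹ := by
        funext x
        rw [zpow_neg, zpow_natCast]
      rw [this]
      exact hinv
    exact (contDiffAt_const.mul (h1.mul h2) : _)
  have hG_cd : ContDiffOn ℝ (⊤ : ℕ∞) G (ball (0:ℂ) R) := by
    intro z hz
    have : ContDiffAt ℝ (⊤ : ℕ∞) G z := by
      have hcomp : ContDiffAt ℝ (⊤ : ℕ∞) (fun z : ℂ => F (z + p)) z :=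
        (hF_cd (z + p) (hne z hz)).comp (g := F) z (contDiffAt_id.add contDiffAt_const)
      exact hcomp.sub contDiffAt_const
    exact this.contDiffWithinAt
  -- the isometry
  set e : ℂ ≃ₗᵢ[ℝ] EuclideanSpace ℝ (Fin 2) := Complex.orthonormalBasisOneI.repr with he_def
  refine ⟨fun v => e (G (e.symm v)), ?_, ?_, ?_, ?_⟩
  · -- smoothness
    have hmap : Set.MapsTo (fun v => e.symm v) (ball (0 : EuclideanSpace ℝ (Fin 2)) R)
        (ball (0:ℂ) R) := by
      intro v hv
      rw [mem_ball_zero_iff] at hv ⊢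
      simpa using hv
    exact e.contDiff.comp_contDiffOn (hG_cd.comp e.symm.contDiff.contDiffOn hmap)
  · intro v hv
    rw [mem_ball_zero_iff] at hv ⊢
    have : ‖e.symm v‖ < R := by simpa using hv
    have := hGmaps (e.symm v) (by rwa [mem_ball_zero_iff])
    simpa using this
  · have h0 : e.symm (0 : EuclideanSpace ℝ (Fin 2)) = 0 := by simp
    simp only [h0]
    have : G 0 = 0 := by simp [hG_def]
    rw [this]
    simp
  · intro v hv
    set z : ℂ := e.symm v with hz_def
    have hzball : z ∈ ball (0:ℂ) R := by
      rw [mem_ball_zero_iff]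
      rw [mem_ball_zero_iff] at hv
      simpa [hz_def] using hv
    have hwne : z + p ≠ 0 := hne z hzball
    set A : ℂ := C * ((k+1 : ℂ) * (z+p) ^ k * ((starRingEnd ℂ) (z+p)) ^ (-(k:ℤ))) with hA_def
    set B : ℂ := C * ((z+p) ^ (k+1) * (-(k:ℂ) * ((starRingEnd ℂ) (z+p)) ^ (-(k:ℤ) - 1))) with hB_def
    have hF' : HasFDerivAt F (symplAux.Lab A B) (z + p) :=
      symplAux.hasFDerivAt_F k C (z+p) hwne
    have hG' : HasFDerivAt G (symplAux.Lab A B) z := by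
      have h1 : HasFDerivAt (fun z : ℂ => F (z + p))
          ((symplAux.Lab A B).comp (ContinuousLinearMap.id ℝ ℂ)) z := by
        exact hF'.comp (g := F) z ((hasFDerivAt_id z).add_const p)
      have h2 := h1.sub_const (F p)
      simpa [hG_def] using h2
    have hf' : HasFDerivAt (fun v => e (G (e.symm v)))
        ((e.toContinuousLinearEquiv : ℂ →L[ℝ] EuclideanSpace ℝ (Fin 2)).comp
          ((symplAux.Lab A B).comp
            (e.symm.toContinuousLinearEquiv : EuclideanSpace ℝ (Fin 2) →L[ℝ] ℂ))) v := by
      have he1 : HasFDerivAt (fun w : ℂ => e w)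
          (e.toContinuousLinearEquiv : ℂ →L[ℝ] EuclideanSpace ℝ (Fin 2)) (G z) :=
        (e.toContinuousLinearEquiv : ℂ →L[ℝ] EuclideanSpace ℝ (Fin 2)).hasFDerivAt
      have he2 : HasFDerivAt (fun v : EuclideanSpace ℝ (Fin 2) => e.symm v)
          (e.symm.toContinuousLinearEquiv : EuclideanSpace ℝ (Fin 2) →L[ℝ] ℂ) v :=
        (e.symm.toContinuousLinearEquiv : EuclideanSpace ℝ (Fin 2) →L[ℝ] ℂ).hasFDerivAt
      exact he1.comp v (hG'.comp v he2)
    rw [hf'.fderiv]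
    -- determinant
    have hconj_det : LinearMap.det
        (((e.toContinuousLinearEquiv : ℂ →L[ℝ] EuclideanSpace ℝ (Fin 2)).comp
          ((symplAux.Lab A B).comp
            (e.symm.toContinuousLinearEquiv : EuclideanSpace ℝ (Fin 2) →L[ℝ] ℂ))) :
          EuclideanSpace ℝ (Fin 2) →ₗ[ℝ] EuclideanSpace ℝ (Fin 2))
        = LinearMap.det ((symplAux.Lab A B : ℂ →L[ℝ] ℂ) : ℂ →ₗ[ℝ] ℂ) := by
      have := LinearMap.det_conj ((symplAux.Lab A B : ℂ →L[ℝ] ℂ) : ℂ →ₗ[ℝ] ℂ)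
        e.toLinearEquiv
      rw [← this]
      congr 1
    show ContinuousLinearMap.det _ = 1
    rw [ContinuousLinearMap.det]
    rw [hconj_det, symplAux.Lab_det]
    have hc2' : c ^ 2 * (2 * (k:ℝ) + 1) = 1 := by exact_mod_cast hc2
    exact symplAux.normSq_det k c hc2' (z+p) hwne
end

section
/- Let (C^{p,q})_{p,q ∈ ℤ} be a double cochain complex with horizontal differential d^h : C^{p,q} → C^{p+1,q} and vertical differential d^v : C^{p,q} → C^{p,q+1} satisfying d^h∘d^h = 0, d^v∘d^v = 0, and d^h∘d^v + d^v∘d^h = 0, which is bounded on the right: C^{p,q} = 0 for p > N. Assume there are maps K : C^{p,*} → C^{p-1,*} satisfying d^h∘K + K∘d^h = id. Let x ∈ C^{N,q} and suppose α_i ∈ C^{N-i-1, q+i+1} for i ≥ 0 satisfy (1) d^h α_{i+1} + d^v α_i = 0 for all i ≥ 0, and (2) d^h α_0 = −d^v x. Define β_i = Σ_{j=1}^{i} (−1)^{j−1} (K∘d^v)^{j−1} K α_{i−j} + (−1)^i (K∘d^v)^i K x ∈ C^{N−i−1, q+i}. Then (1) d^h β_{i+1} + d^v β_i = α_i for all i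 ≥ 0, and (2) d^h β_0 = x. -/
/-- Lemma on double complexes. The bigraded double complex
`C^{p,q}` (with `d^h d^h = 0`, `d^v d^v = 0`, `d^h d^v + d^v d^h = 0`, a horizontal
contraction `K` with `d^h K + K d^h = id`, and bounded on the right by `N`) is collapsed
here to a single abelian group `M`: the hypothesis that `C^{p,q} = 0` for `p > N` and
`x ∈ C^{N,q}` becomes `d^h x = 0`.  Given `α_i` with `d^h α_{i+1} + d^v α_i = 0` and
`d^h α_0 = - d^v x`, the elements
`β_i = Σ_{j=1}^{i} (-1)^{j-1} (K d^v)^{j-1} K α_{i-j} + (-1)^i (K d^v)^i K x`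
satisfy `d^h β_{i+1} + d^v β_i = α_i` and `d^h β_0 = x`. -/
theorem double_complex_lifting_lemma {M : Type*} [AddCommGroup M]
    (dh dv K : M →+ M)
    (hhh : ∀ y, dh (dh y) = 0) (hvv : ∀ y, dv (dv y) = 0)
    (hhv : ∀ y, dh (dv y) + dv (dh y) = 0)
    (hK : ∀ y, dh (K y) + K (dh y) = y)
    (x : M) (hx : dh x = 0)
    (α : ℕ → M)
    (hα1 : ∀ i, dh (α (i + 1)) + dv (α i) = 0)
    (hα2 : dh (α 0) = -dv x)
    (β : ℕ → M)
    (hβ : ∀ i, β i =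
      (∑ j ∈ Finset.range i, ((-1 : ℤ) ^ j) • (⇑K ∘ ⇑dv)^[j] (K (α (i - 1 - j)))) +
        ((-1 : ℤ) ^ i) • (⇑K ∘ ⇑dv)^[i] (K x)) :
    (∀ i, dh (β (i + 1)) + dv (β i) = α i) ∧ dh (β 0) = x := by
  -- β 0 = K x
  have hβ0 : β 0 = K x := by simpa using hβ 0
  have h0 : dh (β 0) = x := by
    have := hK x
    rw [hβ0]
    rw [hx, map_zero, add_zero] at this
    exact this
  -- recurrence: β (i+1) = K (α i) - K (dv (β i))
  have hrec : ∀ i, β (i + 1) = K (α i) - K (dv (β i)) := by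
    intro i
    rw [hβ (i + 1), hβ i, map_add, map_add, map_sum, map_sum,
      Finset.sum_range_succ']
    have hiter : ∀ (j : ℕ) (y : M), K (dv ((⇑K ∘ ⇑dv)^[j] y)) = (⇑K ∘ ⇑dv)^[j + 1] y := by
      intro j y
      rw [Function.iterate_succ_apply']
      rfl
    simp only [map_zsmul, hiter, Function.iterate_zero_apply, pow_zero, one_smul]
    have : ∀ j ∈ Finset.range i,
        ((-1 : ℤ) ^ (j + 1)) • (⇑K ∘ ⇑dv)^[j + 1] (K (α (i + 1 - 1 - (j + 1))))
        = -(((-1 : ℤ) ^ j) • (⇑K ∘ ⇑dv)^[j + 1] (K (α (i - 1 - j)))) := by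
      intro j hj
      have h1 : i + 1 - 1 - (j + 1) = i - 1 - j := by omega
      rw [h1, pow_succ, mul_comm, neg_one_mul, neg_smul]
    rw [Finset.sum_congr rfl this]
    have h2 : ((-1 : ℤ) ^ (i + 1)) • (⇑K ∘ ⇑dv)^[i + 1] (K x)
        = -(((-1 : ℤ) ^ i) • (⇑K ∘ ⇑dv)^[i + 1] (K x)) := by
      rw [pow_succ, mul_comm, neg_one_mul, neg_smul]
    rw [h2]
    simp only [Nat.add_sub_cancel, Nat.sub_zero]
    rw [Finset.sum_neg_distrib]
    abel
  -- key step
  have step : ∀ i, dh (α i) = -dv (dh (β i)) → dh (β (i + 1)) + dv (β i) = α i := by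
    intro i hQ
    rw [hrec i, map_sub]
    have e1 : dh (K (α i)) = α i - K (dh (α i)) := eq_sub_of_add_eq (hK (α i))
    have e2 : dh (K (dv (β i))) = dv (β i) - K (dh (dv (β i))) :=
      eq_sub_of_add_eq (hK (dv (β i)))
    have e3 : dh (dv (β i)) = -dv (dh (β i)) := eq_neg_of_add_eq_zero_left (hhv (β i))
    rw [e1, e2, e3, hQ]
    simp only [map_neg]
    abel
  have main : ∀ i, dh (β (i + 1)) + dv (β i) = α i := by
    intro i
    induction i with
    | zero =>
      refine step 0 ?_
      rw [h0, hα2]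
    | succ n ih =>
      refine step (n + 1) ?_
      have hb : dh (β (n + 1)) = α n - dv (β n) := eq_sub_of_add_eq ih
      rw [hb, map_sub, hvv, sub_zero]
      exact eq_neg_of_add_eq_zero_left (hα1 n)
  exact ⟨main, h0⟩
end

section
/- Let p : E → B be a map of topological spaces with the following weak homotopy lifting property with respect to closed balls: for every commutative square with D^k × {0} → E over D^k × [0,1] → B in which the homotopy D^k × [0,1] → B is constant on [0, ε] for some ε > 0, there is a lift D^k × [0,1] → E extending the given map on D^k × {0}. If B is contractible and p has this weak homotopy lifting property with respect to all closed balls D^k, then the inclusion of any fiber p^{−1}(b) into E is a weak homotopy equivalence. -/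
open unitInterval Metric

/-- The closed unit ball in `ℝᵏ`. -/
def uBall (k : ℕ) : Set (EuclideanSpace ℝ (Fin k)) := Metric.closedBall 0 1

/-- The unit sphere in `ℝᵏ`. -/
def uSphere (k : ℕ) : Set (EuclideanSpace ℝ (Fin k)) := Metric.sphere 0 1

/-- The inclusion `S^{k-1} ↪ D^k` as a continuous map. -/
noncomputable def uIncl (k : ℕ) : C(↥(uSphere k), ↥(uBall k)) :=
  ⟨Set.inclusion Metric.sphere_subset_closedBall,
    continuous_inclusion Metric.sphere_subset_closedBall⟩

/-- A continuous map `φ : X → Y` is a weak homotopy equivalence iff for every `k` and every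
commuting square `S^{k-1} → X`, `D^k → Y`, there is a lift `h : D^k → X` agreeing with the
given map on `S^{k-1}` and such that `φ ∘ h` is homotopic to the given map `D^k → Y`
relative to `S^{k-1}` (the standard lifting characterization). -/
def IsWeakHomotopyEquiv {X Y : Type*} [TopologicalSpace X] [TopologicalSpace Y]
    (φ : C(X, Y)) : Prop :=
  ∀ (k : ℕ) (f : C(↥(uSphere k), X)) (g : C(↥(uBall k), Y)),
    g.comp (uIncl k) = φ.comp f →
    ∃ h : C(↥(uBall k), X), h.comp (uIncl k) = f ∧
      (φ.comp h).HomotopicRel g {z : ↥(uBall k) | (z : EuclideanSpace ℝ (Fin k)) ∈ uSphere k}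

namespace WHEAux

variable {k : ℕ}

lemma mem_uBall_iff (x : EuclideanSpace ℝ (Fin k)) : x ∈ uBall k ↔ ‖x‖ ≤ 1 :=
  mem_closedBall_zero_iff

lemma mem_uSphere_iff (x : EuclideanSpace ℝ (Fin k)) : x ∈ uSphere k ↔ ‖x‖ = 1 :=
  mem_sphere_zero_iff_norm

lemma normz_le_one (z : ↥(uBall k)) : ‖(z : EuclideanSpace ℝ (Fin k))‖ ≤ 1 :=
  (mem_uBall_iff _).mp z.2

lemma smul_mem (z : ↥(uBall k)) {d : ℝ} (hd : 0 < d)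
    (h : ‖(z : EuclideanSpace ℝ (Fin k))‖ ≤ d) :
    d⁻¹ • (z : EuclideanSpace ℝ (Fin k)) ∈ uBall k := by
  rw [mem_uBall_iff, norm_smul, Real.norm_eq_abs, abs_inv, abs_of_pos hd]
  calc d⁻¹ * ‖(z : EuclideanSpace ℝ (Fin k))‖ ≤ d⁻¹ * d := by gcongr
    _ = 1 := inv_mul_cancel₀ hd.ne'

/-- Clamp a real number into the unit interval. -/
noncomputable def clampI (r : ℝ) : I :=
  ⟨min (max r 0) 1, Set.mem_Icc.mpr ⟨le_min (le_max_right _ _) zero_le_one, min_le_right _ _⟩⟩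

lemma continuous_clampI : Continuous clampI :=
  ((continuous_id.max continuous_const).min continuous_const).subtype_mk _

lemma clampI_eq_one {r : ℝ} (h : 1 ≤ r) : clampI r = 1 := by
  apply Subtype.ext
  show min (max r 0) 1 = ((1 : I) : ℝ)
  rw [max_eq_left (by linarith), min_eq_right h]
  rfl

lemma clampI_eq_zero {r : ℝ} (h : r ≤ 0) : clampI r = 0 := by
  apply Subtype.ext
  show min (max r 0) 1 = ((0 : I) : ℝ)
  rw [max_eq_right h, min_eq_left zero_le_one]
  rfl

/-- The scaling denominator. -/
noncomputable def dd (z : ↥(uBall k)) (r : ℝ) : ℝ :=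
  max (max ‖(z : EuclideanSpace ℝ (Fin k))‖ (1 - r)) (1 / 2)

lemma dd_pos (z : ↥(uBall k)) (r : ℝ) : 0 < dd z r :=
  lt_of_lt_of_le (by norm_num) (le_max_right _ _)

lemma le_dd (z : ↥(uBall k)) (r : ℝ) : ‖(z : EuclideanSpace ℝ (Fin k))‖ ≤ dd z r :=
  le_trans (le_max_left _ _) (le_max_left _ _)

/-- Scaling of a point of the ball by the denominator `dd`. -/
noncomputable def scl (z : ↥(uBall k)) (r : ℝ) : ↥(uBall k) :=
  ⟨(dd z r)⁻¹ • (z : EuclideanSpace ℝ (Fin k)), smul_mem z (dd_pos z r) (le_dd z r)⟩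

lemma scl_zero (z : ↥(uBall k)) : scl z 0 = z := by
  apply Subtype.ext
  show (dd z 0)⁻¹ • (z : EuclideanSpace ℝ (Fin k)) = z
  have : dd z 0 = 1 := by
    rw [dd, sub_zero, max_eq_right (normz_le_one z), max_eq_left (by norm_num)]
  rw [this]; simp

lemma scl_sphere (z : ↥(uBall k)) {r : ℝ} (h1 : ‖(z : EuclideanSpace ℝ (Fin k))‖ = 1 - r)
    (h2 : 1 / 2 ≤ ‖(z : EuclideanSpace ℝ (Fin k))‖) :
    ((scl z r : ↥(uBall k)) : EuclideanSpace ℝ (Fin k)) ∈ uSphere k := by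
  have hpos : (0 : ℝ) < ‖(z : EuclideanSpace ℝ (Fin k))‖ := by linarith
  have hdval : dd z r = ‖(z : EuclideanSpace ℝ (Fin k))‖ := by
    rw [dd, ← h1, max_self, max_eq_left (by linarith)]
  rw [mem_uSphere_iff]
  show ‖(dd z r)⁻¹ • (z : EuclideanSpace ℝ (Fin k))‖ = 1
  rw [norm_smul, Real.norm_eq_abs, abs_inv, abs_of_pos (dd_pos z r), hdval,
    inv_mul_cancel₀ hpos.ne']

/-- Auxiliary function for the relative nullhomotopy.  For `r ∈ [0,1]` this is a
nullhomotopy of `u` rel the sphere, but it is defined for all real `r`. -/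
noncomputable def relNullAux {B : Type*} [TopologicalSpace B]
    (C : C(I × B, B)) (u : C(↥(uBall k), B)) (b : B) : ↥(uBall k) × ℝ → B := fun x =>
  if max (2 * x.2 - 1) (‖(x.1 : EuclideanSpace ℝ (Fin k))‖ - (1 - x.2)) ≤ 0 then
    C (clampI (2 * x.2), u (scl x.1 x.2))
  else
    C (clampI (2 * (1 - ‖(x.1 : EuclideanSpace ℝ (Fin k))‖) * min 1 (2 - 2 * x.2)), b)

variable {B : Type*} [TopologicalSpace B] {C : C(I × B, B)} {u : C(↥(uBall k), B)} {b : B}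

lemma continuous_relNullAux
    (hu : ∀ z : ↥(uBall k), (z : EuclideanSpace ℝ (Fin k)) ∈ uSphere k → u z = b)
    (hC1 : ∀ x x' : B, C (1, x) = C (1, x')) :
    Continuous (relNullAux C u b) := by
  have hnorm : Continuous fun x : ↥(uBall k) × ℝ => ‖(x.1 : EuclideanSpace ℝ (Fin k))‖ :=
    continuous_norm.comp (continuous_subtype_val.comp continuous_fst)
  have hdd : Continuous fun x : ↥(uBall k) × ℝ => dd x.1 x.2 :=
    (hnorm.max (continuous_const.sub continuous_snd)).max continuous_const
  apply Continuous.if_le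
  · -- inner branch continuous
    apply C.continuous.comp
    apply Continuous.prodMk
    · exact continuous_clampI.comp (continuous_const.mul continuous_snd)
    · apply u.continuous.comp
      apply Continuous.subtype_mk
      exact (hdd.inv₀ fun x => (dd_pos x.1 x.2).ne').smul
        (continuous_subtype_val.comp continuous_fst)
  · -- outer branch continuous
    apply C.continuous.comp
    apply Continuous.prodMk
    · exact continuous_clampI.comp
        ((continuous_const.mul (continuous_const.sub hnorm)).mul
          (continuous_const.min (continuous_const.sub (continuous_const.mul continuous_snd))))
    · exact continuous_const
  · exact ((continuous_const.mul continuous_snd).sub continuous_const).max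
      (hnorm.sub (continuous_const.sub continuous_snd))
  · exact continuous_const
  · -- matching on the frontier
    rintro ⟨z, r⟩ h
    dsimp only at h ⊢
    set n := ‖(z : EuclideanSpace ℝ (Fin k))‖ with hn
    have hn0 : 0 ≤ n := norm_nonneg _
    have hn1 : n ≤ 1 := normz_le_one z
    have h1 : 2 * r - 1 ≤ 0 := le_trans (le_max_left _ _) h.le
    have h2 : n - (1 - r) ≤ 0 := le_trans (le_max_right _ _) h.le
    rcases max_choice (2 * r - 1) (n - (1 - r)) with hc | hc <;> rw [h] at hc
    · -- r = 1/2, n ≤ 1/2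
      have hr : r = 1 / 2 := by linarith
      have hnn : n ≤ 1 / 2 := by rw [hr] at h2; linarith
      rw [clampI_eq_one (by rw [hr]; norm_num),
        clampI_eq_one (by rw [hr]; norm_num; linarith)]
      exact hC1 _ _
    · -- n = 1 - r,  2r ≤ 1
      have hnr : n = 1 - r := by linarith
      have hr0 : 0 ≤ r := by rw [hnr] at hn1; linarith
      have hr2 : r ≤ 1 / 2 := by linarith
      have hn2 : 1 / 2 ≤ n := by rw [hnr]; linarith
      rw [hu (scl z r) (scl_sphere z hnr hn2)]
      rw [show 2 * (1 - n) * min 1 (2 - 2 * r) = 2 * r by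
        rw [min_eq_left (by linarith), hnr]; ring]

/-- Relative nullhomotopy in a contractible space: any map of the ball which is constant `b`
on the sphere is homotopic rel the sphere to the constant map `b`, by an initially constant
homotopy. -/
theorem relNull [ContractibleSpace B] (u : C(↥(uBall k), B)) (b : B)
    (hu : ∀ z : ↥(uBall k), (z : EuclideanSpace ℝ (Fin k)) ∈ uSphere k → u z = b) :
    ∃ H : C(↥(uBall k) × I, B),
      (∀ z, H (z, 0) = u z) ∧ (∀ z, H (z, 1) = b) ∧
      (∀ z : ↥(uBall k), (z : EuclideanSpace ℝ (Fin k)) ∈ uSphere k → ∀ t, H (z, t) = b) ∧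
      (∀ z (t : I), (t : ℝ) ≤ 1 / 2 → H (z, t) = H (z, 0)) := by
  obtain ⟨b₀, ⟨Ct⟩⟩ := id_nullhomotopic B
  set C : C(I × B, B) := Ct.toContinuousMap with hC
  have hC0 : ∀ x : B, C (0, x) = x := fun x => Ct.apply_zero x
  have hC1 : ∀ x x' : B, C (1, x) = C (1, x') := fun x x' => by
    have e1 : Ct (1, x) = b₀ := Ct.apply_one x
    have e2 : Ct (1, x') = b₀ := Ct.apply_one x'
    show Ct (1, x) = Ct (1, x')
    rw [e1, e2]
  have hcont : Continuous (relNullAux C u b) := continuous_relNullAux hu hC1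
  have eval0 : ∀ z : ↥(uBall k), relNullAux C u b (z, 0) = u z := by
    intro z
    have hn1 : ‖(z : EuclideanSpace ℝ (Fin k))‖ ≤ 1 := normz_le_one z
    simp only [relNullAux]
    rw [if_pos (by rw [max_le_iff]; constructor <;> linarith)]
    rw [clampI_eq_zero (by norm_num), scl_zero, hC0]
  have eval1 : ∀ z : ↥(uBall k), relNullAux C u b (z, 1) = b := by
    intro z
    have hn0 : 0 ≤ ‖(z : EuclideanSpace ℝ (Fin k))‖ := norm_nonneg _
    simp only [relNullAux]
    rw [if_neg (by rw [max_le_iff]; push_neg; intro h; linarith)]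
    rw [show 2 * (1 - ‖(z : EuclideanSpace ℝ (Fin k))‖) * min 1 (2 - 2 * (1:ℝ)) = 0 by
      norm_num]
    rw [clampI_eq_zero le_rfl, hC0]
  have evalsph : ∀ z : ↥(uBall k), (z : EuclideanSpace ℝ (Fin k)) ∈ uSphere k →
      ∀ r : ℝ, 0 ≤ r → relNullAux C u b (z, r) = b := by
    intro z hz r hr
    have hn : ‖(z : EuclideanSpace ℝ (Fin k))‖ = 1 := (mem_uSphere_iff _).mp hz
    by_cases hcond : max (2 * r - 1) (‖(z : EuclideanSpace ℝ (Fin k))‖ - (1 - r)) ≤ 0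
    · have h2 : ‖(z : EuclideanSpace ℝ (Fin k))‖ - (1 - r) ≤ 0 :=
        le_trans (le_max_right _ _) hcond
      have hr0 : r = 0 := by rw [hn] at h2; linarith
      rw [hr0, eval0, hu z hz]
    · simp only [relNullAux]
      rw [if_neg hcond]
      rw [show 2 * (1 - ‖(z : EuclideanSpace ℝ (Fin k))‖) * min 1 (2 - 2 * r) = 0 by
        rw [hn]; ring]
      rw [clampI_eq_zero le_rfl, hC0]
  refine ⟨⟨fun x => relNullAux C u b (x.1, max 0 (2 * (x.2 : ℝ) - 1)),
    hcont.comp (continuous_fst.prodMk (continuous_const.max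
      ((continuous_const.mul (continuous_subtype_val.comp continuous_snd)).sub
        continuous_const)))⟩, ?_, ?_, ?_, ?_⟩
  · intro z
    show relNullAux C u b (z, max 0 (2 * ((0:I) : ℝ) - 1)) = u z
    rw [show max 0 (2 * ((0:I) : ℝ) - 1) = 0 by norm_num]
    exact eval0 z
  · intro z
    show relNullAux C u b (z, max 0 (2 * ((1:I) : ℝ) - 1)) = b
    rw [show max 0 (2 * ((1:I) : ℝ) - 1) = 1 by norm_num]
    exact eval1 z
  · intro z hz t
    exact evalsph z hz _ (le_max_left _ _)
  · intro z t ht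
    show relNullAux C u b (z, max 0 (2 * (t : ℝ) - 1))
      = relNullAux C u b (z, max 0 (2 * ((0:I) : ℝ) - 1))
    congr 1
    rw [show max 0 (2 * ((0:I) : ℝ) - 1) = 0 by norm_num,
      max_eq_left (by linarith)]

end WHEAux

open WHEAux in
/-- If `p : E → B` has the weak homotopy lifting property with respect to all
closed balls (initially constant homotopies into `B` lift, extending a given initial lift)
and `B` is contractible, then for every `b` the inclusion of the fiber `p⁻¹(b)` into `E`
is a weak homotopy equivalence. -/
theorem fiber_inclusion_weak_equivalence_of_contractible_base
    {E B : Type*} [TopologicalSpace E] [TopologicalSpace B]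
    (p : E → B) (hp : Continuous p) [ContractibleSpace B]
    (hlift : ∀ (k : ℕ) (K : C(↥(uBall k), E)) (H : C(↥(uBall k) × I, B)),
      (∀ z, H (z, 0) = p (K z)) →
      (∃ ε : ℝ, 0 < ε ∧ ∀ (z : ↥(uBall k)) (t : I), (t : ℝ) ≤ ε → H (z, t) = H (z, 0)) →
      ∃ H' : C(↥(uBall k) × I, E),
        (∀ w, p (H' w) = H w) ∧ ∀ z, H' (z, 0) = K z) :
    ∀ b : B,
      IsWeakHomotopyEquiv
        (⟨Subtype.val, continuous_subtype_val⟩ : C({e : E // p e = b}, E)) := by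
  intro b k f g hfg
  set φ : C({e : E // p e = b}, E) := ⟨Subtype.val, continuous_subtype_val⟩ with hφ
  -- `g` agrees with `f` on the sphere
  have key : ∀ (w : ↥(uBall k)) (hw : (w : EuclideanSpace ℝ (Fin k)) ∈ uSphere k),
      g w = (f ⟨(w : EuclideanSpace ℝ (Fin k)), hw⟩ : E) := by
    intro w hw
    have := DFunLike.congr_fun hfg (⟨(w : EuclideanSpace ℝ (Fin k)), hw⟩ : ↥(uSphere k))
    simp only [ContinuousMap.comp_apply] at this
    have harg : uIncl k (⟨(w : EuclideanSpace ℝ (Fin k)), hw⟩ : ↥(uSphere k)) = w := by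
      apply Subtype.ext; rfl
    rw [harg] at this
    exact this
  set u : C(↥(uBall k), B) := ⟨fun z => p (g z), hp.comp g.continuous⟩ with hu'
  have hu : ∀ z : ↥(uBall k), (z : EuclideanSpace ℝ (Fin k)) ∈ uSphere k → u z = b := by
    intro z hz
    show p (g z) = b
    rw [key z hz]
    exact (f _).2
  obtain ⟨H, H0, H1, Hsph, Hini⟩ := relNull u b hu
  obtain ⟨H', hH'p, hH'0⟩ := hlift k g H (fun z => H0 z)
    ⟨1 / 2, by norm_num, fun z t ht => Hini z t ht⟩
  -- the map `q₁ : D^k → D^k × I`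
  have hτmem : ∀ z : ↥(uBall k), min 1 (2 - 2 * ‖(z : EuclideanSpace ℝ (Fin k))‖) ∈ I := by
    intro z
    have := normz_le_one z
    exact Set.mem_Icc.mpr ⟨le_min zero_le_one (by linarith), min_le_left _ _⟩
  have hζpos : ∀ z : ↥(uBall k), (0:ℝ) < max ‖(z : EuclideanSpace ℝ (Fin k))‖ (1 / 2) :=
    fun z => lt_of_lt_of_le (by norm_num) (le_max_right _ _)
  have hζmem : ∀ z : ↥(uBall k),
      (max ‖(z : EuclideanSpace ℝ (Fin k))‖ (1 / 2))⁻¹ • (z : EuclideanSpace ℝ (Fin k))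
        ∈ uBall k :=
    fun z => smul_mem z (hζpos z) (le_max_left _ _)
  set ζ : ↥(uBall k) → ↥(uBall k) := fun z =>
    ⟨(max ‖(z : EuclideanSpace ℝ (Fin k))‖ (1 / 2))⁻¹ • (z : EuclideanSpace ℝ (Fin k)),
      hζmem z⟩ with hζ'
  set τ : ↥(uBall k) → I := fun z =>
    ⟨min 1 (2 - 2 * ‖(z : EuclideanSpace ℝ (Fin k))‖), hτmem z⟩ with hτ'
  have hζcont : Continuous ζ := by
    apply Continuous.subtype_mk
    exact (((continuous_norm.comp continuous_subtype_val).max continuous_const).inv₀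
      fun z => (hζpos z).ne').smul continuous_subtype_val
  have hτcont : Continuous τ := by
    apply Continuous.subtype_mk
    exact continuous_const.min
      (continuous_const.sub (continuous_const.mul (continuous_norm.comp continuous_subtype_val)))
  -- on the sphere, `ζ z = z` and `τ z = 0`
  have hζsph : ∀ z : ↥(uBall k), (z : EuclideanSpace ℝ (Fin k)) ∈ uSphere k → ζ z = z := by
    intro z hz
    apply Subtype.ext
    show (max ‖(z : EuclideanSpace ℝ (Fin k))‖ (1 / 2))⁻¹ • (z : EuclideanSpace ℝ (Fin k))
      = (z : EuclideanSpace ℝ (Fin k))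
    rw [(mem_uSphere_iff _).mp hz, max_eq_left (by norm_num)]
    simp
  have hτsph : ∀ z : ↥(uBall k), (z : EuclideanSpace ℝ (Fin k)) ∈ uSphere k → τ z = 0 := by
    intro z hz
    apply Subtype.ext
    show min 1 (2 - 2 * ‖(z : EuclideanSpace ℝ (Fin k))‖) = 0
    rw [(mem_uSphere_iff _).mp hz]
    norm_num
  -- `H'` composed with `q₁` lands in the fiber
  have hfib : ∀ z : ↥(uBall k), p (H' (ζ z, τ z)) = b := by
    intro z
    rw [hH'p]
    rcases le_total ‖(z : EuclideanSpace ℝ (Fin k))‖ (1 / 2) with h | h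
    · have : τ z = 1 := by
        apply Subtype.ext
        show min 1 (2 - 2 * ‖(z : EuclideanSpace ℝ (Fin k))‖) = 1
        rw [min_eq_left (by linarith)]
      rw [this]
      exact H1 _
    · apply Hsph
      rw [mem_uSphere_iff]
      show ‖(max ‖(z : EuclideanSpace ℝ (Fin k))‖ (1 / 2))⁻¹
        • (z : EuclideanSpace ℝ (Fin k))‖ = 1
      have hpos : (0:ℝ) < ‖(z : EuclideanSpace ℝ (Fin k))‖ := by linarith
      rw [max_eq_left h, norm_smul, Real.norm_eq_abs, abs_inv, abs_of_pos hpos,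
        inv_mul_cancel₀ hpos.ne']
  set h : C(↥(uBall k), {e : E // p e = b}) :=
    ⟨fun z => ⟨H' (ζ z, τ z), hfib z⟩,
      (H'.continuous.comp (hζcont.prodMk hτcont)).subtype_mk _⟩ with hh'
  refine ⟨h, ?_, ?_⟩
  · -- agreement with `f` on the sphere
    ext zs
    show (H' (ζ (uIncl k zs), τ (uIncl k zs)) : E) = (f zs : E)
    have hmem : ((uIncl k zs : ↥(uBall k)) : EuclideanSpace ℝ (Fin k)) ∈ uSphere k := zs.2
    rw [hζsph _ hmem, hτsph _ hmem, hH'0, key _ hmem]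
    exact congrArg Subtype.val (congrArg f (Subtype.ext rfl))
  · -- the homotopy rel sphere
    have memball : ∀ (s : I) (z : ↥(uBall k)),
        (1 - (s:ℝ)) • ((ζ z : ↥(uBall k)) : EuclideanSpace ℝ (Fin k))
          + (s:ℝ) • (z : EuclideanSpace ℝ (Fin k)) ∈ uBall k := by
      intro s z
      rw [mem_uBall_iff]
      have h1 : ‖((ζ z : ↥(uBall k)) : EuclideanSpace ℝ (Fin k))‖ ≤ 1 := normz_le_one _
      have h2 : ‖(z : EuclideanSpace ℝ (Fin k))‖ ≤ 1 := normz_le_one z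
      have hs0 : (0:ℝ) ≤ s := s.2.1
      have hs1 : (s:ℝ) ≤ 1 := s.2.2
      calc ‖(1 - (s:ℝ)) • ((ζ z : ↥(uBall k)) : EuclideanSpace ℝ (Fin k))
            + (s:ℝ) • (z : EuclideanSpace ℝ (Fin k))‖
          ≤ ‖(1 - (s:ℝ)) • ((ζ z : ↥(uBall k)) : EuclideanSpace ℝ (Fin k))‖
            + ‖(s:ℝ) • (z : EuclideanSpace ℝ (Fin k))‖ := norm_add_le _ _
        _ = (1 - (s:ℝ)) * ‖((ζ z : ↥(uBall k)) : EuclideanSpace ℝ (Fin k))‖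
            + (s:ℝ) * ‖(z : EuclideanSpace ℝ (Fin k))‖ := by
            simp only [norm_smul, Real.norm_eq_abs,
              abs_of_nonneg hs0, abs_of_nonneg (show (0:ℝ) ≤ 1 - (s:ℝ) by linarith)]
        _ ≤ (1 - (s:ℝ)) * 1 + (s:ℝ) * 1 := by gcongr <;> linarith
        _ = 1 := by ring
    have memI : ∀ (s : I) (z : ↥(uBall k)), (1 - (s:ℝ)) * ((τ z : I) : ℝ) ∈ I := by
      intro s z
      have ht0 : (0:ℝ) ≤ (τ z : I) := (τ z).2.1
      have ht1 : ((τ z : I) : ℝ) ≤ 1 := (τ z).2.2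
      have hs0 : (0:ℝ) ≤ s := s.2.1
      have hs1 : (s:ℝ) ≤ 1 := s.2.2
      exact Set.mem_Icc.mpr ⟨mul_nonneg (by linarith) ht0, by nlinarith⟩
    refine ⟨⟨⟨⟨fun x => H' (⟨(1 - (x.1:ℝ)) • ((ζ x.2 : ↥(uBall k)) : EuclideanSpace ℝ (Fin k))
        + (x.1:ℝ) • (x.2 : EuclideanSpace ℝ (Fin k)), memball x.1 x.2⟩,
        ⟨(1 - (x.1:ℝ)) * ((τ x.2 : I) : ℝ), memI x.1 x.2⟩), ?_⟩, ?_, ?_⟩, ?_⟩⟩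
    · -- continuity
      apply H'.continuous.comp
      apply Continuous.prodMk
      · apply Continuous.subtype_mk
        have hs : Continuous fun x : I × ↥(uBall k) => ((x.1 : ℝ)) :=
          continuous_subtype_val.comp continuous_fst
        exact ((continuous_const.sub hs).smul
            ((continuous_subtype_val.comp hζcont).comp continuous_snd)).add
          (hs.smul (continuous_subtype_val.comp continuous_snd))
      · apply Continuous.subtype_mk
        exact (continuous_const.sub (continuous_subtype_val.comp continuous_fst)).mul
          (continuous_subtype_val.comp (hτcont.comp continuous_snd))
    · -- at time 0 it is `φ.comp h`
      intro z
      show H' _ = (φ.comp h) z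
      have e1 : (⟨(1 - ((0:I):ℝ)) • ((ζ z : ↥(uBall k)) : EuclideanSpace ℝ (Fin k))
          + ((0:I):ℝ) • (z : EuclideanSpace ℝ (Fin k)), memball 0 z⟩ : ↥(uBall k)) = ζ z := by
        apply Subtype.ext
        show (1 - ((0:I):ℝ)) • ((ζ z : ↥(uBall k)) : EuclideanSpace ℝ (Fin k))
          + ((0:I):ℝ) • (z : EuclideanSpace ℝ (Fin k))
            = ((ζ z : ↥(uBall k)) : EuclideanSpace ℝ (Fin k))
        simp
      have e2 : (⟨(1 - ((0:I):ℝ)) * ((τ z : I) : ℝ), memI 0 z⟩ : I) = τ z := by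
        apply Subtype.ext
        show (1 - ((0:I):ℝ)) * ((τ z : I) : ℝ) = ((τ z : I) : ℝ)
        simp
      rw [e1, e2]
      rfl
    · -- at time 1 it is `g`
      intro z
      show H' _ = g z
      have e1 : (⟨(1 - ((1:I):ℝ)) • ((ζ z : ↥(uBall k)) : EuclideanSpace ℝ (Fin k))
          + ((1:I):ℝ) • (z : EuclideanSpace ℝ (Fin k)), memball 1 z⟩ : ↥(uBall k)) = z := by
        apply Subtype.ext
        show (1 - ((1:I):ℝ)) • ((ζ z : ↥(uBall k)) : EuclideanSpace ℝ (Fin k))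
          + ((1:I):ℝ) • (z : EuclideanSpace ℝ (Fin k)) = (z : EuclideanSpace ℝ (Fin k))
        simp
      have e2 : (⟨(1 - ((1:I):ℝ)) * ((τ z : I) : ℝ), memI 1 z⟩ : I) = 0 := by
        apply Subtype.ext
        show (1 - ((1:I):ℝ)) * ((τ z : I) : ℝ) = 0
        simp
      rw [e1, e2]
      exact hH'0 z
    · -- rel the sphere
      intro s z hz
      have hz' : (z : EuclideanSpace ℝ (Fin k)) ∈ uSphere k := hz
      show H' _ = (φ.comp h) z
      have e1 : (⟨(1 - (s:ℝ)) • ((ζ z : ↥(uBall k)) : EuclideanSpace ℝ (Fin k))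
          + (s:ℝ) • (z : EuclideanSpace ℝ (Fin k)), memball s z⟩ : ↥(uBall k)) = z := by
        apply Subtype.ext
        show (1 - (s:ℝ)) • ((ζ z : ↥(uBall k)) : EuclideanSpace ℝ (Fin k))
          + (s:ℝ) • (z : EuclideanSpace ℝ (Fin k)) = (z : EuclideanSpace ℝ (Fin k))
        rw [hζsph z hz']
        rw [← add_smul]
        simp
      have e2 : (⟨(1 - (s:ℝ)) * ((τ z : I) : ℝ), memI s z⟩ : I) = 0 := by
        apply Subtype.ext
        show (1 - (s:ℝ)) * ((τ z : I) : ℝ) = 0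
        rw [hτsph z hz']
        simp
      rw [e1, e2]
      show H' (z, 0) = (φ.comp h) z
      rw [hH'0]
      show g z = (h z : E)
      show g z = H' (ζ z, τ z)
      rw [hζsph z hz', hτsph z hz', hH'0]
end

section
/- Let M be a smooth manifold of dimension n, A a compact topological space, and η : A → Ω¹(M) a continuous family of 1-forms. Let {W_α}_{α∈I} be a locally finite open cover of A × M such that each W_α is contained in A × U for some coordinate chart U of M, and let {ρ_α} be a partition of unity subordinate to {W_α}. Then for each z ∈ A, d(η(z)) = Σ_{α∈I} Σ_{r=1}^{n} d h^r_α(z) ∧ d t^r_α(z), where for each α one writes ρ_α(z,·) η(z) = Σ_r h^r_α(z) d s^r_α in the local coordinates s^1_α, …, s^n_α of a chart containing the M-projection of W_α, the functions t^r_α(z) = φ_α(z,·) s^r_α are cut-off versions of the coordinates (with φ_α a bump function equal to 1 on the support of ρ_α and supported in W_α), and each summand z ↦ h^r_α(z), t^r_α(z) is supported in W_α. -/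
noncomputable section

/-- The weak Whitney (compact-open `C^∞`) topology on smooth maps `ℝⁿ → F`. -/
def whitneyTopology (n : ℕ) (F : Type*) [NormedAddCommGroup F] [NormedSpace ℝ F] :
    TopologicalSpace (EuclideanSpace ℝ (Fin n) → F) :=
  TopologicalSpace.induced
    (fun f (m : ℕ) =>
      UniformOnFun.ofFun {K : Set (EuclideanSpace ℝ (Fin n)) | IsCompact K}
        (iteratedFDeriv ℝ m f))
    inferInstance

private lemma euclid_expand {n : ℕ} (L : EuclideanSpace ℝ (Fin n) →L[ℝ] ℝ)
    (v : EuclideanSpace ℝ (Fin n)) :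
    L v = ∑ r : Fin n, L (EuclideanSpace.single r (1:ℝ)) * v r := by
  have h := ((EuclideanSpace.basisFun (Fin n) ℝ).toBasis.sum_repr v)
  conv_lhs => rw [← h]
  rw [map_sum]
  simp [EuclideanSpace.basisFun_apply, mul_comm]

/-- Let `η : A → Ω¹(M)` be a continuous family of smooth `1`-forms on the
`n`-manifold `M` (modelled here on a chart `M = ℝⁿ`, so that the coordinates `s^r` are the
standard ones), parametrized by a compact space `A`.  Let `{W_α}` be a locally finite open
cover of `A × M`, each member lying over a coordinate chart, `{ρ_α}` a subordinate
partition of unity, and `φ_α` cut-off functions equal to `1` near `supp ρ_α` and supported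
in `W_α`.  Writing `ρ_α(z,·) η(z) = Σ_r h^r_α(z) ds^r` and `t^r_α(z) = φ_α(z,·) s^r`, the
summands `h^r_α, t^r_α` are supported in `W_α` and for every `z`:
`d(η(z)) = Σ_α Σ_r d h^r_α(z) ∧ d t^r_α(z)`. -/
theorem family_of_exact_two_forms_as_wedges
    (n : ℕ) {A : Type*} [TopologicalSpace A] [CompactSpace A]
    (η : A → EuclideanSpace ℝ (Fin n) → (EuclideanSpace ℝ (Fin n) →L[ℝ] ℝ))
    (hη_smooth : ∀ z, ContDiff ℝ (⊤ : ℕ∞) (η z))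
    (hη_cont : @Continuous A _ _
      (whitneyTopology n (EuclideanSpace ℝ (Fin n) →L[ℝ] ℝ)) η)
    {I : Type*} (W : I → Set (A × EuclideanSpace ℝ (Fin n)))
    (hWopen : ∀ α, IsOpen (W α)) (hWlf : LocallyFinite W)
    (hWcover : ∀ w : A × EuclideanSpace ℝ (Fin n), ∃ α, w ∈ W α)
    (hWchart : ∀ α, ∃ U : Set (EuclideanSpace ℝ (Fin n)), IsOpen U ∧
      W α ⊆ (Set.univ : Set A) ×ˢ U)
    (ρ : I → A × EuclideanSpace ℝ (Fin n) → ℝ)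
    (hρcont : ∀ α, Continuous (ρ α))
    (hρsmooth : ∀ α z, ContDiff ℝ (⊤ : ℕ∞) (fun x => ρ α (z, x)))
    (hρsupp : ∀ α, tsupport (ρ α) ⊆ W α)
    (hρlf : LocallyFinite fun α => Function.support (ρ α))
    (hρsum : ∀ w, ∑ᶠ α, ρ α w = 1)
    (φ : I → A × EuclideanSpace ℝ (Fin n) → ℝ)
    (hφcont : ∀ α, Continuous (φ α))
    (hφsmooth : ∀ α z, ContDiff ℝ (⊤ : ℕ∞) (fun x => φ α (z, x)))
    (hφsupp : ∀ α, tsupport (φ α) ⊆ W α)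
    (hφone : ∀ α, ∃ O : Set (A × EuclideanSpace ℝ (Fin n)), IsOpen O ∧
      tsupport (ρ α) ⊆ O ∧ ∀ w ∈ O, φ α w = 1)
    (h t : I → Fin n → A → EuclideanSpace ℝ (Fin n) → ℝ)
    (hdef : ∀ α r z x, h α r z x = ρ α (z, x) * η z x (EuclideanSpace.single r 1))
    (tdef : ∀ α r z x, t α r z x = φ α (z, x) * x r) :
    (∀ α r, Function.support (fun w : A × EuclideanSpace ℝ (Fin n) =>
        (h α r w.1 w.2, t α r w.1 w.2)) ⊆ W α) ∧
    ∀ (z : A) (x u v : EuclideanSpace ℝ (Fin n)),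
      fderiv ℝ (η z) x u v - fderiv ℝ (η z) x v u =
        ∑ᶠ α : I, ∑ r : Fin n,
          (fderiv ℝ (h α r z) x u * fderiv ℝ (t α r z) x v
            - fderiv ℝ (h α r z) x v * fderiv ℝ (t α r z) x u) := by
  constructor
  · rintro α r ⟨z, y⟩ hw
    simp only [Function.mem_support] at hw
    have hw' : h α r z y ≠ 0 ∨ t α r z y ≠ 0 := by
      by_contra hc
      push_neg at hc
      exact hw (by rw [hc.1, hc.2]; rfl)
    rcases hw' with hh | ht
    · have hne : ρ α (z, y) ≠ 0 := fun h0 => hh (by rw [hdef, h0, zero_mul])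
      exact hρsupp α (subset_closure hne)
    · have hne : φ α (z, y) ≠ 0 := fun h0 => ht (by rw [tdef, h0, zero_mul])
      exact hφsupp α (subset_closure hne)
  · intro z x u v
    have hcz : Continuous fun y : EuclideanSpace ℝ (Fin n) => ((z, y) : A × _) :=
      continuous_const.prodMk continuous_id
    set g : Fin n → EuclideanSpace ℝ (Fin n) → ℝ :=
      fun r y => η z y (EuclideanSpace.single r 1) with hgdef
    have hdef' : ∀ α r, h α r z = fun y => ρ α (z, y) * g r y :=
      fun α r => funext (hdef α r z)
    have hgsm : ∀ r, ContDiff ℝ (⊤ : ℕ∞) (g r) :=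
      fun r => (hη_smooth z).clm_apply contDiff_const
    have hhdiff : ∀ α r, DifferentiableAt ℝ (h α r z) x := by
      intro α r
      rw [hdef' α r]
      exact (((hρsmooth α z).mul (hgsm r)).differentiable (by simp)).differentiableAt
    obtain ⟨N, hN, hNfin⟩ := hρlf (z, x)
    set T : Finset I := hNfin.toFinset with hT
    have hVN : {y | (z, y) ∈ N} ∈ nhds x := hcz.continuousAt.preimage_mem_nhds hN
    -- membership in T from tsupport
    have hTmem : ∀ α, (z, x) ∈ tsupport (ρ α) → α ∈ T := by
      intro α hα
      rcases mem_closure_iff_nhds.1 hα N hN with ⟨w, hwN, hwsupp⟩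
      exact hNfin.mem_toFinset.2 ⟨w, hwsupp, hwN⟩
    -- fderiv of h vanishes off tsupport ρ
    have hfd_zero : ∀ α r, (z, x) ∉ tsupport (ρ α) → fderiv ℝ (h α r z) x = 0 := by
      intro α r hα
      have hopen : IsOpen (tsupport (ρ α))ᶜ := (isClosed_closure).isOpen_compl
      have hmem : {y | (z, y) ∈ (tsupport (ρ α))ᶜ} ∈ nhds x :=
        hcz.continuousAt.preimage_mem_nhds (hopen.mem_nhds hα)
      have hev : h α r z =ᶠ[nhds x] (fun _ => (0:ℝ)) := by
        filter_upwards [hmem] with y hy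
        have h0 : ρ α (z, y) = 0 := image_eq_zero_of_notMem_tsupport hy
        rw [hdef, h0, zero_mul]
      rw [hev.fderiv_eq, fderiv_fun_const]
      rfl
    -- the sum over α of h equals g, near x, as a finite sum over T
    have hsum_eq : ∀ r, g r =ᶠ[nhds x] fun y => ∑ α ∈ T, h α r z y := by
      intro r
      filter_upwards [hVN] with y hy
      have hρfin : (Function.support fun α => ρ α (z, y)).Finite :=
        hρlf.point_finite (z, y)
      have hsupp : (Function.support fun α => ρ α (z, y) * g r y) ⊆ ↑T := by
        intro α hα
        have hne : ρ α (z, y) ≠ 0 := by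
          intro h0
          apply hα
          simp only [Function.mem_support] at *
          rw [h0, zero_mul]
        exact hNfin.mem_toFinset.2 ⟨(z, y), hne, hy⟩
      calc g r y = (∑ᶠ α, ρ α (z, y)) * g r y := by rw [hρsum, one_mul]
        _ = ∑ᶠ α, ρ α (z, y) * g r y := finsum_mul _ _
        _ = ∑ α ∈ T, ρ α (z, y) * g r y := finsum_eq_sum_of_support_subset _ hsupp
        _ = ∑ α ∈ T, h α r z y := by
            refine Finset.sum_congr rfl fun α _ => ?_
            rw [hdef' α r]
    have hgfd : ∀ r, fderiv ℝ (g r) x = ∑ α ∈ T, fderiv ℝ (h α r z) x := by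
      intro r
      rw [(hsum_eq r).fderiv_eq, fderiv_fun_sum (fun α _ => hhdiff α r)]
    -- key pointwise identity replacing dt by ds
    have key : ∀ α (r : Fin n),
        fderiv ℝ (h α r z) x u * fderiv ℝ (t α r z) x v
          - fderiv ℝ (h α r z) x v * fderiv ℝ (t α r z) x u
        = fderiv ℝ (h α r z) x u * v r - fderiv ℝ (h α r z) x v * u r := by
      intro α r
      obtain ⟨O, hOopen, hOsupp, hOone⟩ := hφone α
      by_cases hx : (z, x) ∈ O
      · have hev : t α r z =ᶠ[nhds x] fun y => y r := by
          have hmem : {y | (z, y) ∈ O} ∈ nhds x :=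
            hcz.continuousAt.preimage_mem_nhds (hOopen.mem_nhds hx)
          filter_upwards [hmem] with y hy
          rw [tdef, hOone _ hy, one_mul]
        have htv : fderiv ℝ (t α r z) x = EuclideanSpace.proj (𝕜 := ℝ) r := by
          rw [hev.fderiv_eq]
          have hco : (fun y : EuclideanSpace ℝ (Fin n) => y r)
              = ⇑(EuclideanSpace.proj (𝕜 := ℝ) r) := rfl
          rw [hco, ContinuousLinearMap.fderiv]
        rw [htv]
        simp [EuclideanSpace.proj]
      · have hzt : (z, x) ∉ tsupport (ρ α) := fun hc => hx (hOsupp hc)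
        rw [hfd_zero α r hzt]
        simp
    -- relate fderiv of g to fderiv of η
    have hfg : ∀ (r : Fin n) (w : EuclideanSpace ℝ (Fin n)),
        fderiv ℝ (g r) x w = fderiv ℝ (η z) x w (EuclideanSpace.single r 1) := by
      intro r w
      rw [hgdef]
      rw [fderiv_clm_apply ((hη_smooth z).differentiable (by simp) x)
        (differentiableAt_const _)]
      simp
    -- support of the summand function
    set F : I → ℝ := fun α => ∑ r : Fin n,
      (fderiv ℝ (h α r z) x u * fderiv ℝ (t α r z) x v
        - fderiv ℝ (h α r z) x v * fderiv ℝ (t α r z) x u) with hF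
    have hsuppF : Function.support F ⊆ ↑T := by
      intro α hα
      by_contra hαT
      have hzt : (z, x) ∉ tsupport (ρ α) := fun hc => hαT (hTmem α hc)
      apply hα
      simp only [hF]
      refine Finset.sum_eq_zero fun r _ => ?_
      rw [hfd_zero α r hzt]
      simp
    calc fderiv ℝ (η z) x u v - fderiv ℝ (η z) x v u
        = ∑ r : Fin n, (fderiv ℝ (g r) x u * v r - fderiv ℝ (g r) x v * u r) := by
          rw [euclid_expand (fderiv ℝ (η z) x u) v, euclid_expand (fderiv ℝ (η z) x v) u,
            ← Finset.sum_sub_distrib]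
          refine Finset.sum_congr rfl fun r _ => ?_
          rw [hfg r u, hfg r v]
      _ = ∑ r : Fin n, ∑ α ∈ T,
            (fderiv ℝ (h α r z) x u * v r - fderiv ℝ (h α r z) x v * u r) := by
          refine Finset.sum_congr rfl fun r _ => ?_
          rw [hgfd r, ContinuousLinearMap.sum_apply, ContinuousLinearMap.sum_apply,
            Finset.sum_mul, Finset.sum_mul, ← Finset.sum_sub_distrib]
      _ = ∑ α ∈ T, ∑ r : Fin n,
            (fderiv ℝ (h α r z) x u * v r - fderiv ℝ (h α r z) x v * u r) :=
          Finset.sum_comm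
      _ = ∑ α ∈ T, F α := by
          refine Finset.sum_congr rfl fun α _ => ?_
          simp only [hF]
          exact (Finset.sum_congr rfl fun r _ => (key α r)).symm
      _ = ∑ᶠ α, F α := (finsum_eq_sum_of_support_subset _ hsuppF).symm
end
end

section
/- Let π : E → B be a map of topological spaces. Then π has the weak homotopy lifting property with respect to a space A (i.e. for every square with top map k : A × {0} → E and bottom homotopy H : A × [0,1] → B with π∘k = H₀, there exists H̃ : A × [0,1] → E with π∘H̃ = H and H̃₀ vertically homotopic to k) if and only if π has the usual homotopy lifting property with respect to A restricted to homotopies H that are initially constant (H(a, t) = H(a, 0) for all a and all t ≤ ε, for some ε > 0). -/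
open unitInterval Set

noncomputable def pr (x : ℝ) : I := Set.projIcc 0 1 zero_le_one x

lemma pr_cont : Continuous pr := continuous_projIcc (h := zero_le_one)

lemma pr_coe (t : I) : pr (t : ℝ) = t := Set.projIcc_val zero_le_one t

lemma coe_pr {x : ℝ} (h0 : 0 ≤ x) (h1 : x ≤ 1) : ((pr x : I) : ℝ) = x := by
  simp [pr, Set.projIcc_of_mem zero_le_one ⟨h0, h1⟩]

lemma pr_nonpos {x : ℝ} (h : x ≤ 0) : pr x = 0 := by
  simp [pr, Set.projIcc_of_le_left zero_le_one h]

lemma coeI_zero : ((0 : I) : ℝ) = 0 := rfl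
lemma coeI_one : ((1 : I) : ℝ) = 1 := rfl

/-- Dold: A map `π : E → B` has the weak homotopy lifting property with
respect to a space `A` (homotopies lift after replacing the initial lift by a vertically
homotopic one) if and only if it has the usual homotopy lifting property with respect to
`A` restricted to initially constant homotopies. -/
theorem weak_hlp_iff_initially_constant_hlp
    {A E B : Type*} [TopologicalSpace A] [TopologicalSpace E] [TopologicalSpace B]
    (π : E → B) (hπ : Continuous π) :
    (∀ (k : A → E) (H : A × I → B), Continuous k → Continuous H →
        (∀ a, H (a, 0) = π (k a)) →
        ∃ H' : A × I → E, Continuous H' ∧ (∀ a t, π (H' (a, t)) = H (a, t)) ∧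
          ∃ G : A × I → E, Continuous G ∧ (∀ a, G (a, 0) = k a) ∧
            (∀ a, G (a, 1) = H' (a, 0)) ∧ (∀ a s, π (G (a, s)) = π (k a)))
      ↔
    (∀ (k : A → E) (H : A × I → B), Continuous k → Continuous H →
        (∀ a, H (a, 0) = π (k a)) →
        (∃ ε : ℝ, 0 < ε ∧ ∀ (a : A) (t : I), (t : ℝ) ≤ ε → H (a, t) = H (a, 0)) →
        ∃ H' : A × I → E, Continuous H' ∧ (∀ a t, π (H' (a, t)) = H (a, t)) ∧
          ∀ a, H' (a, 0) = k a) := by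
  have hcoe : Continuous fun p : A × I => ((p.2 : ℝ)) :=
    continuous_subtype_val.comp continuous_snd
  constructor
  · -- weak HLP → initially constant HLP
    rintro whlp k H hk hH h0 ⟨ε, hε, hconst⟩
    set e : ℝ := min ε (1/2) with he_def
    have he0 : 0 < e := lt_min hε (by norm_num)
    have heε : e ≤ ε := min_le_left _ _
    have hehalf : e ≤ 1/2 := min_le_right _ _
    have he1 : e < 1 := lt_of_le_of_lt hehalf (by norm_num)
    have h1e : (0:ℝ) < 1 - e := by linarith
    -- reparametrized homotopy starting at time e
    set K : A × I → B := fun p => H (p.1, pr (e + (p.2 : ℝ) * (1 - e))) with hK_def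
    have hKc : Continuous K :=
      hH.comp (continuous_fst.prodMk (pr_cont.comp
        (continuous_const.add (hcoe.mul continuous_const))))
    have hK0 : ∀ a, K (a, 0) = π (k a) := by
      intro a
      have h1 : K (a, 0) = H (a, pr e) := by
        simp only [hK_def, coeI_zero]; norm_num
      have h2 : H (a, pr e) = H (a, 0) :=
        hconst a (pr e) (by rw [coe_pr he0.le (by linarith)]; exact heε)
      rw [h1, h2, h0]
    obtain ⟨K1, hK1c, hK1π, G, hGc, hG0, hG1, hGπ⟩ := whlp k K hk hKc hK0
    -- glue G (rescaled to [0,e]) with K1 (rescaled to [e,1])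
    refine ⟨fun p => if (p.2 : ℝ) ≤ e then G (p.1, pr ((p.2 : ℝ) / e))
        else K1 (p.1, pr (((p.2 : ℝ) - e) / (1 - e))), ?_, ?_, ?_⟩
    · apply Continuous.if_le
      · exact hGc.comp (continuous_fst.prodMk
          (pr_cont.comp (hcoe.div_const e)))
      · exact hK1c.comp (continuous_fst.prodMk
          (pr_cont.comp ((hcoe.sub continuous_const).div_const (1 - e))))
      · exact hcoe
      · exact continuous_const
      · intro p hp
        have h1 : pr ((p.2 : ℝ) / e) = 1 := by
          rw [hp, div_self he0.ne']
          simpa using pr_coe 1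
        have h2 : pr (((p.2 : ℝ) - e) / (1 - e)) = 0 := by
          rw [hp, sub_self, zero_div]
          simpa using pr_coe 0
        rw [h1, h2, hG1]
    · intro a t
      by_cases ht : (t : ℝ) ≤ e
      · simp only [ht, if_true]
        rw [hGπ, ← h0, ← hconst a t (le_trans ht heε)]
      · simp only [ht, if_false]
        have ht' : e ≤ (t : ℝ) := le_of_not_ge ht
        have hm0 : (0:ℝ) ≤ ((t : ℝ) - e) / (1 - e) := div_nonneg (by linarith) h1e.le
        have hm1 : ((t : ℝ) - e) / (1 - e) ≤ 1 := by
          rw [div_le_one h1e]; have := t.2.2; linarith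
        rw [hK1π]
        simp only [hK_def]
        rw [coe_pr hm0 hm1, div_mul_cancel₀ _ h1e.ne', add_sub_cancel, pr_coe]
    · intro a
      have hpr0 : pr (((0:I) : ℝ)/e) = 0 := by
        rw [coeI_zero, zero_div]; simpa using pr_coe 0
      show (if ((0:I):ℝ) ≤ e then G (a, pr (((0:I):ℝ) / e))
        else K1 (a, pr ((((0:I):ℝ) - e) / (1 - e)))) = k a
      rw [if_pos (show ((0:I):ℝ) ≤ e by rw [coeI_zero]; exact he0.le), hpr0, hG0]
  · -- initially constant HLP → weak HLP
    intro hlp k H hk hH h0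
    set Hh : A × I → B := fun p => H (p.1, pr (2 * (p.2 : ℝ) - 1)) with hHh_def
    have hHhc : Continuous Hh :=
      hH.comp (continuous_fst.prodMk (pr_cont.comp
        ((continuous_const.mul hcoe).sub continuous_const)))
    have hHh0' : ∀ (t : I), (t : ℝ) ≤ 1/2 → ∀ a, Hh (a, t) = H (a, 0) := by
      intro t ht a
      simp only [hHh_def]
      rw [pr_nonpos (by linarith : 2 * (t : ℝ) - 1 ≤ 0)]
    have hHh0 : ∀ a, Hh (a, 0) = π (k a) := by
      intro a
      rw [hHh0' 0 (by rw [coeI_zero]; norm_num) a, h0]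
    obtain ⟨H1, hH1c, hH1π, hH10⟩ := hlp k Hh hk hHhc hHh0
      ⟨1/2, by norm_num, fun a t ht => by
        rw [hHh0' t ht a, ← hHh0' 0 (by rw [coeI_zero]; norm_num) a]⟩
    refine ⟨fun p => H1 (p.1, pr (((p.2 : ℝ) + 1) / 2)), ?_, ?_,
      fun p => H1 (p.1, pr ((p.2 : ℝ) / 2)), ?_, ?_, ?_, ?_⟩
    · exact hH1c.comp (continuous_fst.prodMk
        (pr_cont.comp ((hcoe.add continuous_const).div_const 2)))
    · intro a t
      rw [hH1π]
      simp only [hHh_def]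
      have hm0 : (0:ℝ) ≤ ((t : ℝ) + 1) / 2 := by have := t.2.1; positivity
      have hm1 : ((t : ℝ) + 1) / 2 ≤ 1 := by have := t.2.2; linarith
      rw [coe_pr hm0 hm1]
      have : 2 * (((t : ℝ) + 1) / 2) - 1 = (t : ℝ) := by ring
      rw [this, pr_coe]
    · exact hH1c.comp (continuous_fst.prodMk
        (pr_cont.comp (hcoe.div_const 2)))
    · intro a
      simp only [coeI_zero, zero_div]
      have : pr (0:ℝ) = 0 := by simpa using pr_coe 0
      rw [this, hH10]
    · intro a
      simp only [coeI_zero, coeI_one]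
      norm_num
    · intro a s
      rw [hH1π]
      have hs2 : (s : ℝ) / 2 ≤ 1/2 := by have := s.2.2; linarith
      have : pr ((s : ℝ) / 2) = pr ((s : ℝ) / 2) := rfl
      rw [hHh0' (pr ((s : ℝ) / 2)) (by rw [coe_pr (by have := s.2.1; positivity) (by linarith)]; exact hs2) a, h0]
end
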